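/- arXiv:2312.01227 — 2 statements merged into one kernel-verified Lean document; each statement's English description precedes it below -/
import Mathlib

section
/- Let p_t be a probability density function on ℝ^d with p_t > 0 almost everywhere, let G : ℝ^d → ℝ be measurable with |G| ≤ L almost everywhere, let α_t > 0, and define p_{t+1} = exp(−α_t G) p_t / ∫ exp(−α_t G) p_t. Then for every probability density function p on ℝ^d with KL[p, p_t] < ∞, KL[p, p_{t+1}] − KL[p, p_t] ≤ α_t ∫ G (p − p_t) + 2 α_t² L². -/
/-!
Writing `Z = ∫ exp(-α G) p_t`, the log-ratio `log (p / p_{t+1})` equals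
`log (p / p_t) + α G + log Z` wherever `p > 0`, so the change of divergence is exactly
`α ∫ G p + log Z`. Under the probability measure with density `p_t`, `Z` is the moment generating
function of `G` at `-α`, and Hoeffding's lemma for the bounded variable `G` gives
`log Z ≤ -α ∫ G p_t + α² L² / 2`.
-/

open MeasureTheory

noncomputable section

/-- A probability density function on a measure space: nonnegative, integrable,
integrating to one. -/
def IsPdf {X : Type*} [MeasureSpace X] (p : X → ℝ) : Prop :=
  Integrable p ∧ (∀ x, 0 ≤ p x) ∧ ∫ x, p x = 1

/-- Kullback–Leibler divergence `KL[p, g] = ∫ p log (p/g)`. -/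
def KL {X : Type*} [MeasureSpace X] (p g : X → ℝ) : ℝ :=
  ∫ x, p x * Real.log (p x / g x)

open ProbabilityTheory Real

theorem ProbabilityTheory.cgf_le_of_abs_le {Ω : Type*} [MeasurableSpace Ω] {μ : Measure Ω}
    [IsProbabilityMeasure μ] {X : Ω → ℝ} {L : ℝ} (hX : AEMeasurable X μ)
    (hXL : ∀ᵐ ω ∂μ, |X ω| ≤ L) (t : ℝ) :
    cgf X μ t ≤ t * μ[X] + L ^ 2 * t ^ 2 / 2 := by
  have hsub := hasSubgaussianMGF_of_mem_Icc hX (a := -L) (b := L)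
    (by filter_upwards [hXL] with ω h using abs_le.mp h)
  have hc : (((‖L - -L‖₊ / 2) ^ 2 : NNReal) : ℝ) = L ^ 2 := by
    simp only [NNReal.coe_pow, NNReal.coe_div, coe_nnnorm, norm_eq_abs, sub_neg_eq_add,
      ← two_mul, abs_mul]
    norm_num [sq_abs]
  have hcentered := hsub.cgf_le t
  rw [hc, cgf] at hcentered
  have hmgf : mgf X μ t = mgf (fun ω ↦ X ω - μ[X]) μ t * exp (t * μ[X]) := by
    rw [← mgf_add_const]
    simp
  rw [cgf, hmgf, log_mul (mgf_pos (hsub.integrable_exp_mul t)).ne' (exp_pos _).ne', log_exp]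
  linarith

variable {X : Type*} [MeasureSpace X]

def pdfMeasure (q : X → ℝ) : Measure X :=
  volume.withDensity fun x ↦ ENNReal.ofReal (q x)

theorem pdfMeasure_absolutelyContinuous (q : X → ℝ) : pdfMeasure q ≪ volume :=
  withDensity_absolutelyContinuous _ _

namespace IsPdf

variable {q G : X → ℝ} {L : ℝ}

theorem isProbabilityMeasure_pdfMeasure (hq : IsPdf q) :
    IsProbabilityMeasure (pdfMeasure q) := by
  constructor
  rw [pdfMeasure, withDensity_apply _ MeasurableSet.univ, Measure.restrict_univ,
    ← ofReal_integral_eq_lintegral_ofReal hq.1 (Filter.Eventually.of_forall hq.2.1), hq.2.2,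
    ENNReal.ofReal_one]

theorem integral_pdfMeasure (hq : IsPdf q) (f : X → ℝ) :
    ∫ x, f x ∂pdfMeasure q = ∫ x, f x * q x := by
  rw [pdfMeasure, integral_withDensity_eq_integral_toReal_smul₀
    hq.1.aemeasurable.ennreal_ofReal (Filter.Eventually.of_forall fun _ ↦ ENNReal.ofReal_lt_top)]
  simp only [ENNReal.toReal_ofReal (hq.2.1 _), smul_eq_mul, mul_comm]

theorem integral_exp_mul_pos (hq : IsPdf q) (hG : AEMeasurable G) (hGL : ∀ᵐ x, |G x| ≤ L)
    (t : ℝ) : 0 < ∫ x, exp (t * G x) * q x := by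
  have := hq.isProbabilityMeasure_pdfMeasure
  rw [← hq.integral_pdfMeasure]
  exact mgf_pos <| integrable_exp_mul_of_mem_Icc (a := -L) (b := L)
    (hG.mono_ac (pdfMeasure_absolutelyContinuous q))
    ((pdfMeasure_absolutelyContinuous q).ae_le (hGL.mono fun _ ↦ abs_le.mp))

theorem log_integral_exp_mul_le (hq : IsPdf q) (hG : AEMeasurable G) (hGL : ∀ᵐ x, |G x| ≤ L)
    (t : ℝ) : log (∫ x, exp (t * G x) * q x) ≤ t * (∫ x, G x * q x) + L ^ 2 * t ^ 2 / 2 := by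
  have := hq.isProbabilityMeasure_pdfMeasure
  simpa only [cgf, mgf, hq.integral_pdfMeasure] using
    cgf_le_of_abs_le (μ := pdfMeasure q) (hG.mono_ac (pdfMeasure_absolutelyContinuous q))
      ((pdfMeasure_absolutelyContinuous q).ae_le hGL) t

end IsPdf

theorem KL_exp_mul_div {p g h : X → ℝ} {Z : ℝ} (hp : IsPdf p) (hg : ∀ᵐ x, g x ≠ 0) (hZ : Z ≠ 0)
    (hpg : Integrable fun x ↦ p x * log (p x / g x)) (hhp : Integrable fun x ↦ h x * p x) :
    KL p (fun x ↦ exp (h x) * g x / Z) = KL p g - (∫ x, h x * p x) + log Z := by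
  have hpoint : (fun x ↦ p x * log (p x / (exp (h x) * g x / Z))) =ᵐ[volume]
      fun x ↦ p x * log (p x / g x) - h x * p x + log Z * p x := by
    filter_upwards [hg] with x hgx
    rcases eq_or_ne (p x) 0 with hpx | hpx
    · simp [hpx]
    · rw [show p x / (exp (h x) * g x / Z) = p x / g x * Z / exp (h x) by field_simp,
        log_div (mul_ne_zero (div_ne_zero hpx hgx) hZ) (exp_ne_zero _), log_exp,
        log_mul (div_ne_zero hpx hgx) hZ]
      ring
  have hsub : Integrable fun x ↦ p x * log (p x / g x) - h x * p x := hpg.sub hhp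
  rw [KL, integral_congr_ae hpoint, integral_add hsub (hp.1.const_mul (log Z)),
    integral_sub hpg hhp, integral_const_mul, hp.2.2, mul_one, KL]

theorem smd_step_kl_bound_general {d : ℕ} (pt G : (Fin d → ℝ) → ℝ) (αt L : ℝ)
    (hpt : IsPdf pt) (hpt_pos : ∀ᵐ x ∂(volume), 0 < pt x)
    (hG : Measurable G) (hGb : ∀ᵐ x ∂(volume), |G x| ≤ L) :
    ∀ p : (Fin d → ℝ) → ℝ, IsPdf p →
      Integrable (fun x => p x * Real.log (p x / pt x)) →
      KL p (fun x => Real.exp (-αt * G x) * pt x /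
            ∫ y, Real.exp (-αt * G y) * pt y) - KL p pt ≤
        αt * (∫ x, G x * (p x - pt x)) + 2 * αt ^ 2 * L ^ 2 := by
  intro p hp hKL
  have hGL : ∀ᵐ x, ‖G x‖ ≤ L := by simpa only [Real.norm_eq_abs] using hGb
  have hGp : Integrable fun x ↦ G x * p x := hp.1.bdd_mul hG.aestronglyMeasurable hGL
  have hGpt : Integrable fun x ↦ G x * pt x := hpt.1.bdd_mul hG.aestronglyMeasurable hGL
  rw [KL_exp_mul_div hp (hpt_pos.mono fun _ ↦ ne_of_gt)
    (hpt.integral_exp_mul_pos hG.aemeasurable hGb (-αt)).ne' hKL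
    (by simpa only [mul_assoc] using hGp.const_mul (-αt))]
  have hlogZ := hpt.log_integral_exp_mul_le hG.aemeasurable hGb (-αt)
  simp only [mul_assoc, mul_sub, integral_sub hGp hGpt]
  rw [integral_const_mul]
  nlinarith [sq_nonneg (αt * L)]

/-- One-step divergence decrease bound for the mirror descent update
`p_{t+1} ∝ exp(−α_t G) p_t`:
`KL[p, p_{t+1}] − KL[p, p_t] ≤ α_t ∫ G (p − p_t) + 2 α_t² L²`. -/
theorem smd_step_kl_bound {d : ℕ} (pt G : (Fin d → ℝ) → ℝ) (αt L : ℝ)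
    (hpt : IsPdf pt) (hpt_pos : ∀ᵐ x ∂(volume), 0 < pt x)
    (hG : Measurable G) (hGb : ∀ᵐ x ∂(volume), |G x| ≤ L) (hα : 0 < αt) :
    ∀ p : (Fin d → ℝ) → ℝ, IsPdf p →
      Integrable (fun x => p x * Real.log (p x / pt x)) →
      KL p (fun x => Real.exp (-αt * G x) * pt x /
            ∫ y, Real.exp (-αt * G y) * pt y) - KL p pt ≤
        αt * (∫ x, G x * (p x - pt x)) + 2 * αt ^ 2 * L ^ 2 :=
  smd_step_kl_bound_general pt G αt L hpt hpt_pos hG hGb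
end
end

section
/- Let v be a probability density function on ℝ^d with v > 0 almost everywhere, let q : ℝ^d → (0,∞) be measurable with |log q| ≤ L, let α > 0, and define p' = q^α v / ∫ q^α v. Then ‖v − p'‖_TV ≤ αL/2, and moreover KL[p', v] ≤ KL[p', v] + KL[v, p'] ≤ 2αL ‖v − p'‖_TV ≤ α²L². -/
/-!
Write the update as `p' = v · exp (h - log Z)` with `h = α log q ∈ [-αL, αL]` and
`Z = ∫ e^h v ∈ [e^{-αL}, e^{αL}]`, so that `p' / v ∈ [e^{-m'}, e^m]` with `m + m' = 2αL`.
Splitting the space where `p' ≥ v` and where `p' < v` bounds the total variation by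
`tanh (αL / 2) ≤ αL / 2`. The symmetrised divergence is `∫ (p' - v) log (p' / v)`, and since
`∫ (p' - v) = 0` the constant `log Z` drops out, leaving `∫ (p' - v) h ≤ αL ∫ |p' - v|`.
Finally `KL[v, p'] ≥ 0` because `log (p' / v) ≤ p' / v - 1`.
-/

open MeasureTheory

noncomputable section

/-- Total variation distance between two densities: `(1/2) ∫ |p - g|`. -/
def TV {X : Type*} [MeasureSpace X] (p g : X → ℝ) : ℝ :=
  (1 / 2) * ∫ x, |p x - g x|

open Real

-- `tanh (s / 2) ≤ s / 2`: the difference has derivative `1 - e^{-s} (1 + s) ≥ 0`.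
lemma two_mul_one_sub_exp_neg_le {s : ℝ} (hs : 0 ≤ s) :
    2 * (1 - exp (-s)) ≤ s * (1 + exp (-s)) := by
  let f : ℝ → ℝ := fun t => t * (1 + exp (-t)) - 2 * (1 - exp (-t))
  have hf' : ∀ t, HasDerivAt f (1 - exp (-t) * (1 + t)) t := fun t => by
    have he : HasDerivAt (fun t => exp (-t)) (-exp (-t)) t := by
      simpa using (hasDerivAt_neg t).exp
    exact (((hasDerivAt_id' t).mul (he.const_add 1)).sub
      ((he.const_sub 1).const_mul 2)).congr_deriv (by ring)
  have hmono : Monotone f := monotone_of_deriv_nonneg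
    (fun t => (hf' t).differentiableAt) fun t => by
      rw [(hf' t).deriv, sub_nonneg]
      calc exp (-t) * (1 + t) ≤ exp (-t) * exp t := by
            gcongr; linarith [add_one_le_exp t]
        _ = 1 := by rw [← exp_add, neg_add_cancel, exp_zero]
  have := hmono hs
  simp only [f, neg_zero, exp_zero] at this
  linarith

-- `(1 - x²)(1 - y²) ≤ (1 - xy)²` reduces this to the case `m = m'`.
lemma one_sub_exp_neg_mul_le {m m' : ℝ} (hm : 0 ≤ m) (hm' : 0 ≤ m') :
    (1 - exp (-m)) * (1 - exp (-m')) ≤ (1 - exp (-(m + m'))) * ((m + m') / 4) := by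
  set x := exp (-(m / 2))
  set y := exp (-(m' / 2))
  have hx : exp (-m) = x ^ 2 := by rw [← exp_nat_mul]; ring_nf
  have hy : exp (-m') = y ^ 2 := by rw [← exp_nat_mul]; ring_nf
  have hxy : exp (-(m + m')) = (x * y) ^ 2 := by rw [mul_pow, ← hx, ← hy, ← exp_add]; ring_nf
  have hxy1 : x * y ≤ 1 := by
    rw [← exp_add, exp_le_one_iff]; linarith
  have htanh : 2 * (1 - x * y) ≤ (m + m') / 2 * (1 + x * y) := by
    have := two_mul_one_sub_exp_neg_le (s := (m + m') / 2) (by positivity)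
    rwa [← exp_add, show -(m / 2) + -(m' / 2) = -((m + m') / 2) by ring]
  rw [hx, hy, hxy]
  nlinarith [sq_nonneg (x - y), mul_le_mul_of_nonneg_left htanh (sub_nonneg.2 hxy1)]

section TotalVariation

variable {X : Type*} [MeasureSpace X] {p v : X → ℝ}

lemma TV_nonneg (p v : X → ℝ) : 0 ≤ TV p v :=
  mul_nonneg (by norm_num) (integral_nonneg fun _ => abs_nonneg _)

lemma TV_comm (p v : X → ℝ) : TV p v = TV v p := by
  simp only [TV, abs_sub_comm]

lemma integral_max_sub_zero_eq_TV (hp : Integrable p) (hv : Integrable v)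
    (h : ∫ x, p x = ∫ x, v x) : ∫ x, max (p x - v x) 0 = TV v p := by
  have hpt : ∀ x, max (p x - v x) 0 = (|v x - p x| + (p x - v x)) / 2 := fun x => by
    rcases le_total (p x) (v x) with hx | hx
    · rw [max_eq_right (by linarith), abs_of_nonneg (by linarith)]; ring
    · rw [max_eq_left (by linarith), abs_of_nonpos (by linarith)]; ring
  have habs : Integrable fun x => |v x - p x| := (hv.sub hp).abs
  have hsub : Integrable fun x => p x - v x := hp.sub hv
  simp only [hpt]
  rw [integral_div, integral_add habs hsub, integral_sub hp hv, h, TV]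
  ring

lemma integral_max_eq_one_add_TV (hp : IsPdf p) (hv : IsPdf v) :
    ∫ x, max (p x) (v x) = 1 + TV v p := by
  have hpt : ∀ x, max (p x) (v x) = v x + max (p x - v x) 0 := fun x => by
    rw [← max_add_add_left]; simp
  have hpos : Integrable fun x => max (p x - v x) 0 := (hp.1.sub hv.1).pos_part
  simp only [hpt]
  rw [integral_add hv.1 hpos, hv.2.2,
    integral_max_sub_zero_eq_TV hp.1 hv.1 (hp.2.2.trans hv.2.2.symm)]

lemma TV_le_of_exp_neg_mul_le_of_le_exp_mul {m m' : ℝ} (hp : IsPdf p) (hv : IsPdf v)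
    (hm : 0 ≤ m) (hm' : 0 ≤ m') (hle : ∀ x, p x ≤ exp m * v x)
    (hge : ∀ x, exp (-m') * v x ≤ p x) : TV v p ≤ (m + m') / 4 := by
  rcases (add_nonneg hm hm').eq_or_lt with h0 | hpos
  · obtain rfl : m = 0 := by linarith
    obtain rfl : m' = 0 := by linarith
    have : p = v := funext fun x => le_antisymm (by simpa using hle x) (by simpa using hge x)
    simp [this, TV]
  set a := 1 - exp (-m)
  set b := 1 - exp (-m')
  set T := TV v p
  have hpv : ∫ x, p x = ∫ x, v x := hp.2.2.trans hv.2.2.symm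
  have ha : 0 ≤ a := sub_nonneg.2 (exp_le_one_iff.2 (by linarith))
  have hb : 0 ≤ b := sub_nonneg.2 (exp_le_one_iff.2 (by linarith))
  have hle' : ∀ x, exp (-m) * p x ≤ v x := fun x => by
    calc exp (-m) * p x ≤ exp (-m) * (exp m * v x) := by gcongr; exact hle x
      _ = v x := by rw [← mul_assoc, ← exp_add, neg_add_cancel, exp_zero, one_mul]
  -- Where `p ≥ v` we have `p - v ≤ a p`, and where `p ≤ v` we have `v - p ≤ b v`.
  have hpt : ∀ x, b * max (p x - v x) 0 + a * max (v x - p x) 0 ≤ a * b * max (p x) (v x) :=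
    fun x => by
    rcases le_total (p x) (v x) with hx | hx
    · rw [max_eq_right (sub_nonpos.2 hx), max_eq_left (sub_nonneg.2 hx), max_eq_right hx]
      nlinarith [mul_le_mul_of_nonneg_left (hge x) ha]
    · rw [max_eq_left (sub_nonneg.2 hx), max_eq_right (sub_nonpos.2 hx), max_eq_left hx]
      nlinarith [mul_le_mul_of_nonneg_left (hle' x) hb]
  have hpart : ∀ {f g : X → ℝ}, Integrable f → Integrable g →
      Integrable fun x => max (f x - g x) 0 := fun hf hg => (hf.sub hg).pos_part
  have hint : ∫ x, (b * max (p x - v x) 0 + a * max (v x - p x) 0) ≤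
      ∫ x, a * b * max (p x) (v x) :=
    integral_mono (((hpart hp.1 hv.1).const_mul b).add ((hpart hv.1 hp.1).const_mul a))
      ((hp.1.sup hv.1).const_mul (a * b)) hpt
  rw [integral_add ((hpart hp.1 hv.1).const_mul b) ((hpart hv.1 hp.1).const_mul a),
    integral_const_mul, integral_const_mul, integral_const_mul,
    integral_max_sub_zero_eq_TV hp.1 hv.1 hpv, integral_max_sub_zero_eq_TV hv.1 hp.1 hpv.symm,
    TV_comm p v, integral_max_eq_one_add_TV hp hv] at hint
  have hab : 1 - exp (-(m + m')) = a + b - a * b := by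
    rw [neg_add, exp_add]; ring
  have hc : 0 < a + b - a * b := by
    rw [← hab, sub_pos, exp_lt_one_iff]; linarith
  have htanh : a * b ≤ (a + b - a * b) * ((m + m') / 4) := hab ▸ one_sub_exp_neg_mul_le hm hm'
  nlinarith

end TotalVariation

section LogRatio

variable {X : Type*} [MeasureSpace X] {p v g : X → ℝ}

lemma KL_eq_integral_mul_of_eq_mul_exp (hpv : ∀ x, p x = v x * exp (g x)) :
    KL p v = ∫ x, p x * g x := by
  refine integral_congr_ae (.of_forall fun x => ?_)
  dsimp only
  rcases eq_or_ne (v x) 0 with hx | hx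
  · simp [hpv x, hx]
  · rw [hpv x, mul_div_cancel_left₀ _ hx, log_exp]

lemma KL_eq_neg_integral_mul_of_eq_mul_exp (hpv : ∀ x, p x = v x * exp (g x)) :
    KL v p = -∫ x, v x * g x := by
  rw [KL, ← integral_neg]
  refine integral_congr_ae (.of_forall fun x => ?_)
  dsimp only
  rcases eq_or_ne (v x) 0 with hx | hx
  · simp [hx]
  · rw [hpv x, div_mul_cancel_left₀ hx, ← exp_neg, log_exp, mul_neg]

lemma KL_nonneg_of_eq_mul_exp (hp : IsPdf p) (hv : IsPdf v)
    (hvg : Integrable fun x => v x * g x) (hpv : ∀ x, p x = v x * exp (g x)) :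
    0 ≤ KL v p := by
  have hpt : ∀ x, v x * g x ≤ p x - v x := fun x => by
    rw [hpv x]
    nlinarith [mul_le_mul_of_nonneg_left (add_one_le_exp (g x)) (hv.2.1 x)]
  have : ∫ x, v x * g x ≤ ∫ x, (p x - v x) := integral_mono hvg (hp.1.sub hv.1) hpt
  rw [integral_sub hp.1 hv.1, hp.2.2, hv.2.2, sub_self] at this
  rw [KL_eq_neg_integral_mul_of_eq_mul_exp hpv]
  linarith

lemma KL_add_KL_eq_integral_sub_mul (hpg : Integrable fun x => p x * g x)
    (hvg : Integrable fun x => v x * g x) (hpv : ∀ x, p x = v x * exp (g x)) :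
    KL p v + KL v p = ∫ x, (p x - v x) * g x := by
  simp only [KL_eq_integral_mul_of_eq_mul_exp hpv, KL_eq_neg_integral_mul_of_eq_mul_exp hpv,
    sub_mul]
  rw [integral_sub hpg hvg, sub_eq_add_neg]

-- Since `∫ (p - v) = 0`, the shift `c` does not change the left-hand side.
lemma integral_sub_mul_le_two_mul_TV {c β : ℝ} (hp : IsPdf p) (hv : IsPdf v)
    (hg : AEStronglyMeasurable g) (hβ : ∀ x, |g x + c| ≤ β) :
    ∫ x, (p x - v x) * g x ≤ 2 * β * TV v p := by
  have hsub : Integrable fun x => p x - v x := hp.1.sub hv.1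
  have hshift : Integrable fun x => (p x - v x) * (g x + c) :=
    hsub.mul_bdd (hg.add aestronglyMeasurable_const) (Filter.Eventually.of_forall hβ)
  have hpt : ∀ x, (p x - v x) * (g x + c) ≤ β * |v x - p x| := fun x => by
    rw [abs_sub_comm, mul_comm β]
    exact (le_abs_self _).trans (by rw [abs_mul]; gcongr; exact hβ x)
  have hsplit : (fun x => (p x - v x) * g x) =
      fun x => (p x - v x) * (g x + c) - c * (p x - v x) := by
    funext x; ring
  rw [hsplit, integral_sub hshift (hsub.const_mul c), integral_const_mul,
    integral_sub hp.1 hv.1, hp.2.2, hv.2.2, sub_self, mul_zero, sub_zero]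
  calc ∫ x, (p x - v x) * (g x + c) ≤ ∫ x, β * |v x - p x| :=
        integral_mono hshift ((hv.1.sub hp.1).abs.const_mul β) hpt
    _ = 2 * β * TV v p := by rw [integral_const_mul, TV]; ring

end LogRatio

section ExpTilt

variable {X : Type*} [MeasureSpace X] {v h : X → ℝ} {β : ℝ}

def expTilt (v h : X → ℝ) (x : X) : ℝ :=
  exp (h x) * v x / ∫ y, exp (h y) * v y

lemma expTilt_eq_mul_exp (hZ : 0 < ∫ x, exp (h x) * v x) (x : X) :
    expTilt v h x = v x * exp (h x - log (∫ y, exp (h y) * v y)) := by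
  rw [expTilt, exp_sub, exp_log hZ, mul_comm (v x), mul_div_right_comm]

variable (hv : IsPdf v) (hh : AEStronglyMeasurable h) (hβ : ∀ x, |h x| ≤ β)
include hv hh hβ

lemma integrable_exp_mul : Integrable fun x => exp (h x) * v x :=
  hv.1.bdd_mul (continuous_exp.comp_aestronglyMeasurable hh)
    (.of_forall fun x => by
      rw [norm_of_nonneg (exp_pos _).le]; exact exp_le_exp.2 (abs_le.1 (hβ x)).2)

lemma exp_neg_le_integral_exp_mul : exp (-β) ≤ ∫ x, exp (h x) * v x := by
  have := integral_mono (hv.1.const_mul (exp (-β))) (integrable_exp_mul hv hh hβ) fun x =>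
    mul_le_mul_of_nonneg_right (exp_le_exp.2 (abs_le.1 (hβ x)).1) (hv.2.1 x)
  rwa [integral_const_mul, hv.2.2, mul_one] at this

lemma integral_exp_mul_le_exp : ∫ x, exp (h x) * v x ≤ exp β := by
  have := integral_mono (integrable_exp_mul hv hh hβ) (hv.1.const_mul (exp β)) fun x =>
    mul_le_mul_of_nonneg_right (exp_le_exp.2 (abs_le.1 (hβ x)).2) (hv.2.1 x)
  rwa [integral_const_mul, hv.2.2, mul_one] at this

lemma integral_exp_mul_pos : 0 < ∫ x, exp (h x) * v x :=
  (exp_pos _).trans_le (exp_neg_le_integral_exp_mul hv hh hβ)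

lemma abs_log_integral_exp_mul_le : |log (∫ x, exp (h x) * v x)| ≤ β := by
  have hZ := integral_exp_mul_pos hv hh hβ
  rw [abs_le, le_log_iff_exp_le hZ, log_le_iff_le_exp hZ]
  exact ⟨exp_neg_le_integral_exp_mul hv hh hβ, integral_exp_mul_le_exp hv hh hβ⟩

lemma isPdf_expTilt : IsPdf (expTilt v h) := by
  have hZ := integral_exp_mul_pos hv hh hβ
  refine ⟨(integrable_exp_mul hv hh hβ).div_const _, fun x => ?_, ?_⟩
  · exact div_nonneg (mul_nonneg (exp_pos _).le (hv.2.1 x)) hZ.le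
  · simp only [expTilt]
    rw [integral_div, div_self hZ.ne']

lemma TV_expTilt_le : TV v (expTilt v h) ≤ β / 2 := by
  set c := log (∫ x, exp (h x) * v x)
  have hc := abs_le.1 (abs_log_integral_exp_mul_le hv hh hβ)
  have hp := expTilt_eq_mul_exp (integral_exp_mul_pos hv hh hβ)
  have := TV_le_of_exp_neg_mul_le_of_le_exp_mul (m := β - c) (m' := β + c)
    (isPdf_expTilt hv hh hβ) hv (by linarith) (by linarith)
    (fun x => by
      rw [hp, mul_comm]; gcongr; exacts [hv.2.1 x, (abs_le.1 (hβ x)).2])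
    (fun x => by
      rw [hp, mul_comm]; gcongr; exacts [hv.2.1 x, by linarith [(abs_le.1 (hβ x)).1]])
  linarith

lemma integrable_mul_sub_log_integral_exp_mul {f : X → ℝ} (hf : Integrable f) :
    Integrable fun x => f x * (h x - log (∫ y, exp (h y) * v y)) :=
  hf.mul_bdd (hh.sub aestronglyMeasurable_const) (.of_forall fun x =>
    (abs_sub _ _).trans (add_le_add (hβ x) (abs_log_integral_exp_mul_le hv hh hβ)))

lemma KL_expTilt_add_KL_le :
    KL (expTilt v h) v + KL v (expTilt v h) ≤ 2 * β * TV v (expTilt v h) := by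
  have hpv := expTilt_eq_mul_exp (integral_exp_mul_pos hv hh hβ)
  have hp := isPdf_expTilt hv hh hβ
  rw [KL_add_KL_eq_integral_sub_mul (integrable_mul_sub_log_integral_exp_mul hv hh hβ hp.1)
    (integrable_mul_sub_log_integral_exp_mul hv hh hβ hv.1) hpv]
  exact integral_sub_mul_le_two_mul_TV hp hv (hh.sub aestronglyMeasurable_const)
    (c := log (∫ y, exp (h y) * v y)) fun x => by rw [sub_add_cancel]; exact hβ x

lemma KL_expTilt_nonneg : 0 ≤ KL v (expTilt v h) :=
  KL_nonneg_of_eq_mul_exp (isPdf_expTilt hv hh hβ) hv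
    (integrable_mul_sub_log_integral_exp_mul hv hh hβ hv.1)
    (expTilt_eq_mul_exp (integral_exp_mul_pos hv hh hβ))

end ExpTilt

theorem likelihood_update_displacement_general {d : ℕ}
    (v q : (Fin d → ℝ) → ℝ) (α L : ℝ)
    (hv : IsPdf v)
    (hq_meas : Measurable q) (hq_pos : ∀ x, 0 < q x)
    (hq_bdd : ∀ x, |Real.log (q x)| ≤ L) (hα : 0 < α) :
    TV v (fun x => q x ^ α * v x / ∫ y, q y ^ α * v y) ≤ α * L / 2 ∧
    KL (fun x => q x ^ α * v x / ∫ y, q y ^ α * v y) v ≤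
      KL (fun x => q x ^ α * v x / ∫ y, q y ^ α * v y) v +
        KL v (fun x => q x ^ α * v x / ∫ y, q y ^ α * v y) ∧
    KL (fun x => q x ^ α * v x / ∫ y, q y ^ α * v y) v +
        KL v (fun x => q x ^ α * v x / ∫ y, q y ^ α * v y) ≤
      2 * α * L * TV v (fun x => q x ^ α * v x / ∫ y, q y ^ α * v y) ∧
    2 * α * L * TV v (fun x => q x ^ α * v x / ∫ y, q y ^ α * v y) ≤
      α ^ 2 * L ^ 2 := by
  have htilt : (fun x => q x ^ α * v x / ∫ y, q y ^ α * v y) =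
      expTilt v fun x => α * log (q x) := by
    simp only [rpow_def_of_pos (hq_pos _), mul_comm (log _) α]
    rfl
  have hh : AEStronglyMeasurable fun x => α * log (q x) :=
    (hq_meas.log.const_mul α).aestronglyMeasurable
  have hβ : ∀ x, |α * log (q x)| ≤ α * L := fun x => by
    rw [abs_mul, abs_of_pos hα]; exact mul_le_mul_of_nonneg_left (hq_bdd x) hα.le
  rw [htilt]
  have hTV := TV_expTilt_le hv hh hβ
  have hsym := KL_expTilt_add_KL_le hv hh hβ
  have hKL := KL_expTilt_nonneg hv hh hβ
  have hβ0 : 0 ≤ α * L := by linarith [TV_nonneg v (expTilt v fun x => α * log (q x))]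
  refine ⟨hTV, by linarith, by linarith, ?_⟩
  nlinarith [mul_le_mul_of_nonneg_left hTV hβ0]

/-- Displacement bound for one Bayesian likelihood update `p' ∝ q^α v`:
`‖v − p'‖_TV ≤ αL/2` and
`KL[p', v] ≤ KL[p', v] + KL[v, p'] ≤ 2αL‖v − p'‖_TV ≤ α²L²`. -/
theorem likelihood_update_displacement {d : ℕ}
    (v q : (Fin d → ℝ) → ℝ) (α L : ℝ)
    (hv : IsPdf v) (hv_pos : ∀ᵐ x ∂(volume), 0 < v x)
    (hq_meas : Measurable q) (hq_pos : ∀ x, 0 < q x)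
    (hq_bdd : ∀ x, |Real.log (q x)| ≤ L) (hα : 0 < α) :
    TV v (fun x => q x ^ α * v x / ∫ y, q y ^ α * v y) ≤ α * L / 2 ∧
    KL (fun x => q x ^ α * v x / ∫ y, q y ^ α * v y) v ≤
      KL (fun x => q x ^ α * v x / ∫ y, q y ^ α * v y) v +
        KL v (fun x => q x ^ α * v x / ∫ y, q y ^ α * v y) ∧
    KL (fun x => q x ^ α * v x / ∫ y, q y ^ α * v y) v +
        KL v (fun x => q x ^ α * v x / ∫ y, q y ^ α * v y) ≤
      2 * α * L * TV v (fun x => q x ^ α * v x / ∫ y, q y ^ α * v y) ∧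
    2 * α * L * TV v (fun x => q x ^ α * v x / ∫ y, q y ^ α * v y) ≤
      α ^ 2 * L ^ 2 :=
  likelihood_update_displacement_general v q α L hv hq_meas hq_pos hq_bdd hα
end
end
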